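/- For every real number x with 0 < x < 1/4, setting C(x) = (1 − √(1 − 4x))/(2x), the sequence k ↦ F_k(x)/F_{k+2}(x) converges to (C(x) − 1)/x as k → ∞. -/

import Mathlib

/-!
The diagonal sequence `F_k(x)` satisfies `F_{k+2} = F_{k+1} - x F_k`, whose characteristic roots
`α, β = (1 ± √(1 - 4x))/2` are real and satisfy `0 < β < α` when `0 < x < 1/4`. Hence
`F_k = A αᵏ + B βᵏ` with `A = (1 + √(1 - 4x))/(2√(1 - 4x)) ≠ 0`, so `F_k / F_{k+2} → 1/α²`, and
`1/α² = (1/α - 1)/x = (β/x - 1)/x` because `αβ = x` and `α + β = 1`.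
-/

/-- The two-variable Fibonacci polynomials: `F_0 = F_1 = 1`, `F_2 = 1 - z`,
`F_k = F_{k-1} - x F_{k-2}` for `k ≥ 3`. -/
noncomputable def fibPoly (x z : ℝ) : ℕ → ℝ
  | 0 => 1
  | 1 => 1
  | 2 => 1 - z
  | (k + 3) => fibPoly x z (k + 2) - x * fibPoly x z (k + 1)

open Filter Topology

theorem fibPoly_diag_add_two (x : ℝ) (n : ℕ) :
    fibPoly x x (n + 2) = fibPoly x x (n + 1) - x * fibPoly x x n := by
  cases n <;> simp [fibPoly]

theorem eq_add_pow_of_linearRecurrence {R : Type*} [CommRing R] {u : ℕ → R} {a b α β A B : R}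
    (hu : ∀ n, u (n + 2) = a * u (n + 1) + b * u n)
    (hα : α ^ 2 = a * α + b) (hβ : β ^ 2 = a * β + b)
    (h0 : u 0 = A + B) (h1 : u 1 = A * α + B * β) (n : ℕ) :
    u n = A * α ^ n + B * β ^ n := by
  induction n using Nat.twoStepInduction with
  | zero => simpa using h0
  | one => simpa using h1
  | more n ih ih' =>
    rw [hu, ih, ih', pow_add α n 2, pow_add β n 2, hα, hβ]
    ring

theorem tendsto_add_pow_div_add_pow_add_two {𝕜 : Type*} [NormedField 𝕜] {α β A B : 𝕜}
    (hA : A ≠ 0) (hβα : ‖β‖ < ‖α‖) :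
    Tendsto (fun n : ℕ => (A * α ^ n + B * β ^ n) / (A * α ^ (n + 2) + B * β ^ (n + 2)))
      atTop (𝓝 (α ^ 2)⁻¹) := by
  have hα : α ≠ 0 := norm_pos_iff.mp ((norm_nonneg β).trans_lt hβα)
  set r := β / α
  have hr : Tendsto (fun n : ℕ => r ^ n) atTop (𝓝 0) :=
    tendsto_pow_atTop_nhds_zero_of_norm_lt_one <| by
      rw [norm_div, div_lt_one (norm_pos_iff.mpr hα)]
      exact hβα
  have hβ : β = α * r := (mul_div_cancel₀ β hα).symm
  have hlim : Tendsto (fun n : ℕ => (A + B * r ^ n) / (A * α ^ 2 + B * β ^ 2 * r ^ n))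
      atTop (𝓝 ((A + B * 0) / (A * α ^ 2 + B * β ^ 2 * 0))) :=
    (tendsto_const_nhds.add (tendsto_const_nhds.mul hr)).div
      (tendsto_const_nhds.add (tendsto_const_nhds.mul hr)) (by simp [hA, hα])
  convert hlim using 1
  · funext n
    rw [← mul_div_mul_left (A + B * r ^ n) _ (pow_ne_zero n hα)]
    congr 1 <;> (rw [hβ]; ring)
  · rw [mul_zero, mul_zero, add_zero, add_zero, div_mul_cancel_left₀ hA]

/-- For `0 < x < 1/4`, with `C(x) = (1 − √(1 − 4x))/(2x)`,
the sequence `F_k(x)/F_{k+2}(x)` converges to `(C(x) − 1)/x` as `k → ∞`. -/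
theorem stmt_9 (x : ℝ) (hx0 : 0 < x) (hx1 : x < 1 / 4) :
    Filter.Tendsto (fun k : ℕ => fibPoly x x k / fibPoly x x (k + 2))
      Filter.atTop (nhds (((1 - Real.sqrt (1 - 4 * x)) / (2 * x) - 1) / x)) := by
  set s := Real.sqrt (1 - 4 * x)
  have hs2 : s ^ 2 = 1 - 4 * x := Real.sq_sqrt (by linarith)
  have hs : 0 < s := Real.sqrt_pos.mpr (by linarith)
  have hclosed (k : ℕ) : fibPoly x x k =
      (1 + s) / (2 * s) * ((1 + s) / 2) ^ k + (s - 1) / (2 * s) * ((1 - s) / 2) ^ k :=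
    eq_add_pow_of_linearRecurrence (a := 1) (b := -x)
      (fun n => by rw [fibPoly_diag_add_two]; ring)
      (by linear_combination hs2 / 4) (by linear_combination hs2 / 4)
      (by rw [fibPoly]; field_simp; ring) (by rw [fibPoly]; field_simp; ring) k
  have hlim := tendsto_add_pow_div_add_pow_add_two (α := (1 + s) / 2) (β := (1 - s) / 2)
    (A := (1 + s) / (2 * s)) (B := (s - 1) / (2 * s)) (by positivity)
    (by rw [Real.norm_eq_abs, Real.norm_eq_abs, abs_lt, abs_of_pos (by positivity)]
        constructor <;> linarith)
  simp only [← hclosed] at hlim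
  convert hlim using 2
  have hx : x = (1 - s ^ 2) / 4 := by linarith
  have hx' : 1 - s ^ 2 ≠ 0 := by rw [hs2]; linarith
  rw [hx]
  field_simp
  ring
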